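/- arXiv:2311.00827 — 3 statements merged into one kernel-verified Lean document; each statement's English description precedes it below -/
import Mathlib

section
/- For all a ∈ K, x ∈ L, c ∈ F and j ∈ ℕ: if Tr_{K/F}(a·x^{q^n+1}) = 0 then Tr_{K/F}(a·(c·ξ^j·x)^{q^n+1}) = 0. (Consequently every orbit of the group generated by ξ on the points of PG(2n−1,q) is either contained in or disjoint from the quadric Q_a.) -/
/-! Since `c ^ q ^ n = c`, the element `a * (c * ξ ^ j * x) ^ (q ^ n + 1)` is
`λ * (a * x ^ (q ^ n + 1))` with `λ = c ^ 2 * (ξ ^ (q ^ n + 1)) ^ j`. Both `c` and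
`ξ ^ (q ^ n + 1)` are fixed by `y ↦ y ^ q`, the latter because its `(q - 1)`-th power is
`β ^ (q ^ (2 * n) - 1) = 1`. Hence so is `λ`, and the trace sum is `λ` times the original one. -/

theorem pow_pow_eq_self_of_pow_eq_self {M : Type*} [Monoid M] {q : ℕ} {y : M} (h : y ^ q = y)
    (k : ℕ) : y ^ q ^ k = y := by
  have := Function.IsFixedPt.iterate (f := (· ^ q)) h k
  rwa [Function.IsFixedPt, pow_iterate] at this

theorem pow_eq_self_of_pow_sub_one_eq_one {M : Type*} [Monoid M] {q : ℕ} (hq : 0 < q) {y : M}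
    (h : y ^ (q - 1) = 1) : y ^ q = y := by
  rw [← Nat.sub_add_cancel hq, pow_succ, h, one_mul]

theorem Finset.sum_mul_pow_pow_of_pow_eq_self {R : Type*} [CommSemiring R] (s : Finset ℕ)
    {q : ℕ} {c : R} (hc : c ^ q = c) (y : R) :
    ∑ i ∈ s, (c * y) ^ q ^ i = c * ∑ i ∈ s, y ^ q ^ i := by
  simp only [mul_pow, pow_pow_eq_self_of_pow_eq_self hc, Finset.mul_sum]

theorem Subfield.pow_natCard_of_mem {L : Type*} [Field L] (F : Subfield L) [Finite F] {c : L}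
    (hc : c ∈ F) : c ^ Nat.card F = c := by
  have : Fintype F := Fintype.ofFinite F
  simpa [Nat.card_eq_fintype_card] using congrArg Subtype.val (FiniteField.pow_card (⟨c, hc⟩ : F))

theorem Nat.pow_sub_one_div_mul_pow_add_one_mul_sub_one (q n : ℕ) :
    (q ^ n - 1) / (q - 1) * (q ^ n + 1) * (q - 1) = q ^ (2 * n) - 1 := by
  have hdvd : q - 1 ∣ q ^ n - 1 := by simpa using Nat.sub_dvd_pow_sub_pow q 1 n
  rw [mul_right_comm, Nat.div_mul_cancel hdvd, mul_comm, ← Nat.sq_sub_sq, ← pow_mul, mul_comm,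
    one_pow]

theorem pow_pow_add_one_pow_eq_self {M : Type*} [Monoid M] {q n : ℕ} (hq : 0 < q) {β : M}
    (hβ : β ^ (q ^ (2 * n) - 1) = 1) :
    ((β ^ ((q ^ n - 1) / (q - 1))) ^ (q ^ n + 1)) ^ q =
      (β ^ ((q ^ n - 1) / (q - 1))) ^ (q ^ n + 1) := by
  refine pow_eq_self_of_pow_sub_one_eq_one hq ?_
  rw [← pow_mul, ← pow_mul, ← mul_assoc, Nat.pow_sub_one_div_mul_pow_add_one_mul_sub_one, hβ]

theorem stmt6_general (q n : ℕ)
    (L : Type*) [Field L] [Finite L]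
    (F K : Subfield L)
    (hFcard : Nat.card F = q)
    (β : L) (hβ : orderOf β = q ^ (2 * n) - 1)
    (ξ : L) (hξ : ξ = β ^ ((q ^ n - 1) / (q - 1))) :
    ∀ a ∈ K, ∀ x : L, ∀ c ∈ F, ∀ j : ℕ,
      (∑ i ∈ Finset.range n, (a * x ^ (q ^ n + 1)) ^ q ^ i = 0) →
      ∑ i ∈ Finset.range n, (a * (c * ξ ^ j * x) ^ (q ^ n + 1)) ^ q ^ i = 0 := by
  intro a _ x c hc j h0
  have hq : 0 < q := hFcard ▸ Nat.card_pos
  have hcq : c ^ q = c := hFcard ▸ F.pow_natCard_of_mem hc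
  have hμq : (ξ ^ (q ^ n + 1)) ^ q = ξ ^ (q ^ n + 1) :=
    hξ ▸ pow_pow_add_one_pow_eq_self hq (hβ ▸ pow_orderOf_eq_one β)
  set μ := ξ ^ (q ^ n + 1)
  have hcμq : (c ^ 2 * μ ^ j) ^ q = c ^ 2 * μ ^ j := by
    rw [mul_pow, ← pow_mul, mul_comm 2, pow_mul, hcq, ← pow_mul, mul_comm j, pow_mul, hμq]
  have hfactor : a * (c * ξ ^ j * x) ^ (q ^ n + 1) = c ^ 2 * μ ^ j * (a * x ^ (q ^ n + 1)) := by
    rw [mul_pow, mul_pow, pow_succ c, pow_pow_eq_self_of_pow_eq_self hcq, ← pow_mul, ← pow_mul,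
      mul_comm j, pow_mul]
    ring
  rw [hfactor, Finset.sum_mul_pow_pow_of_pow_eq_self _ hcμq, h0, mul_zero]

/-- For all `a ∈ K`, `x ∈ L`, `c ∈ F` and `j : ℕ`: if `Tr_{K/F}(a * x^(q^n+1)) = 0`
then `Tr_{K/F}(a * (c * ξ^j * x)^(q^n+1)) = 0`; hence every `⟨ξ⟩`-orbit is contained in
or disjoint from the quadric `Q_a`. Here `Tr_{K/F}(z) = ∑ i < n, z^(q^i)` for `z ∈ K`. -/
theorem stmt6 (q n : ℕ) (hq : IsPrimePow q) (hn : 2 ≤ n)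
    (L : Type*) [Field L] [Finite L]
    (F K : Subfield L) (hFK : F ≤ K)
    (hFcard : Nat.card F = q) (hKcard : Nat.card K = q ^ n)
    (hLcard : Nat.card L = q ^ (2 * n))
    (β : L) (hβ : orderOf β = q ^ (2 * n) - 1)
    (ξ : L) (hξ : ξ = β ^ ((q ^ n - 1) / (q - 1))) :
    ∀ a ∈ K, ∀ x : L, ∀ c ∈ F, ∀ j : ℕ,
      (∑ i ∈ Finset.range n, (a * x ^ (q ^ n + 1)) ^ q ^ i = 0) →
      ∑ i ∈ Finset.range n, (a * (c * ξ ^ j * x) ^ (q ^ n + 1)) ^ q ^ i = 0 :=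
  stmt6_general q n L F K hFcard β hβ ξ hξ
end

section
/- Suppose n is even. Let u, v, w be powers of ξ (i.e. u = ξ^i, v = ξ^j, w = ξ^k for some natural numbers i, j, k) such that none of the ratios u/v, v/w, u/w lies in F. Then u, v, w are linearly independent over F: if λ·u + μ·v + ν·w = 0 with λ, μ, ν ∈ F, then λ = μ = ν = 0. (Equivalently, when n is even every ⟨ξ⟩-orbit on PG(2n−1,q) is a cap: no three of its points are collinear.) -/
/-!
Write `Q = q ^ n`. Every power `x` of `ξ` satisfies `x ^ ((q - 1) * (Q + 1)) = 1`, so its norm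
`x ^ (Q + 1)` to `GF(Q)` lies in `F` and `x ^ Q = N(x) / x`. Given a relation
`λ a + μ b + ν = 0` with `a = u / w`, `b = v / w` and all coefficients nonzero, raising to the
`Q`-th power and eliminating `a` shows that `b` is a root of a quadratic over `F`, so
`b ^ (q ^ 2) = b`; symmetrically `a ^ (q ^ 2) = a`. The orders of `a` and `b` then divide
`gcd((q - 1)(Q + 1), q ^ 2 - 1) = (q - 1) gcd(Q + 1, q + 1)`, a divisor of `2 (q - 1)` because `n`
is even. So `a ^ (q - 1)` and `b ^ (q - 1)` are `±1`: the value `1` puts `a` or `b` in `F`, and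
`-1` for both puts `a / b = u / v` in `F`.
-/

open Polynomial

theorem Subfield.mem_iff_pow_card_eq_self {L : Type*} [Field L] (F : Subfield L) [Fintype F]
    {x : L} : x ∈ F ↔ x ^ Fintype.card F = x := by
  have hsplits : Splits (X ^ Fintype.card F - X : F[X]) := by
    rw [splits_iff_card_roots, FiniteField.roots_X_pow_card_sub_X, ← Finset.card_def,
      Finset.card_univ, FiniteField.X_pow_card_sub_X_natDegree_eq _ Fintype.one_lt_card]
  have := FiniteField.roots_X_pow_card_sub_X F ▸ hsplits.roots_map F.subtype ▸
    Multiset.mem_map (b := x)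
  simpa [sub_eq_zero, iff_comm, FiniteField.X_pow_card_sub_X_ne_zero L Fintype.one_lt_card]

theorem Nat.gcd_pow_add_one_add_one_dvd_two {q n : ℕ} (hn : Even n) :
    Nat.gcd (q ^ n + 1) (q + 1) ∣ 2 := by
  have hq : (q + 1 : ℤ) ∣ (q : ℤ) ^ n - 1 := by
    simpa [hn.neg_one_pow] using sub_dvd_pow_sub_pow (q : ℤ) (-1) n
  have h1 : ((Nat.gcd (q ^ n + 1) (q + 1) : ℕ) : ℤ) ∣ (q : ℤ) ^ n + 1 := by
    exact_mod_cast Nat.gcd_dvd_left _ _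
  have h2 : ((Nat.gcd (q ^ n + 1) (q + 1) : ℕ) : ℤ) ∣ (q : ℤ) + 1 := by
    exact_mod_cast Nat.gcd_dvd_right _ _
  have h3 := Int.dvd_sub h1 (h2.trans hq)
  rw [show (q : ℤ) ^ n + 1 - ((q : ℤ) ^ n - 1) = 2 by ring] at h3
  exact_mod_cast h3

theorem eq_of_quadratic_eq_zero {K : Type*} [Field K] {a b c x y z : K} (ha : a ≠ 0)
    (hx : a * x ^ 2 + b * x + c = 0) (hy : a * y ^ 2 + b * y + c = 0)
    (hz : a * z ^ 2 + b * z + c = 0) (hxy : x ≠ y) (hxz : x ≠ z) : y = z := by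
  have hsum_y : a * (x + y) + b = 0 :=
    mul_left_cancel₀ (sub_ne_zero.mpr hxy) (by linear_combination hx - hy)
  have hsum_z : a * (x + z) + b = 0 :=
    mul_left_cancel₀ (sub_ne_zero.mpr hxz) (by linear_combination hx - hz)
  exact sub_eq_zero.mp ((mul_eq_zero.mp (by linear_combination hsum_y - hsum_z)).resolve_left ha)

theorem RingHom.apply_apply_eq_self_of_quadratic {K : Type*} [Field K] (σ : K →+* K)
    {a b c r : K} (ha : a ≠ 0) (hσa : σ a = a) (hσb : σ b = b) (hσc : σ c = c)
    (hr : a * r ^ 2 + b * r + c = 0) : σ (σ r) = r := by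
  have hσroot : ∀ s, a * s ^ 2 + b * s + c = 0 → a * σ s ^ 2 + b * σ s + c = 0 := fun s hs => by
    simpa [hσa, hσb, hσc] using congrArg σ hs
  by_cases hfix : σ r = r
  · rw [hfix, hfix]
  exact (eq_of_quadratic_eq_zero ha (hσroot r hr) hr (hσroot _ (hσroot r hr)) hfix
    (fun h => hfix (σ.injective h).symm)).symm

theorem pow_sub_one_eq_one_or_eq_neg_one {R : Type*} [Ring R] [NoZeroDivisors R] {q n : ℕ}
    (hn : Even n) {b : R} (hN : b ^ ((q - 1) * (q ^ n + 1)) = 1)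
    (hb : b ^ ((q - 1) * (q + 1)) = 1) : b ^ (q - 1) = 1 ∨ b ^ (q - 1) = -1 := by
  have hgcd : b ^ ((q - 1) * Nat.gcd (q ^ n + 1) (q + 1)) = 1 := by
    rw [← Nat.gcd_mul_left, pow_gcd_eq_one]
    exact ⟨hN, hb⟩
  obtain ⟨k, hk⟩ := Nat.gcd_pow_add_one_add_one_dvd_two (q := q) hn
  rw [← sq_eq_one_iff, ← pow_mul, hk, ← mul_assoc, pow_mul, hgcd, one_pow]

theorem pow_sub_one_mul_pow_add_one_eq_one_of_orderOf_eq {M : Type*} [Monoid M] {β : M}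
    {q n : ℕ} (hβ : orderOf β = q ^ (2 * n) - 1) :
    (β ^ ((q ^ n - 1) / (q - 1))) ^ ((q - 1) * (q ^ n + 1)) = 1 := by
  have hdvd : q - 1 ∣ q ^ n - 1 := by simpa using Nat.sub_dvd_pow_sub_pow q 1 n
  have hfactor : (q ^ n - 1) * (q ^ n + 1) = q ^ (2 * n) - 1 := by
    rw [mul_comm, ← Nat.sq_sub_sq, one_pow, ← pow_mul, mul_comm n]
  rw [← pow_mul, ← mul_assoc, Nat.div_mul_cancel hdvd, hfactor, ← hβ, pow_orderOf_eq_one]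

theorem pow_sub_one_mul_add_one_eq_one_of_pow_pow_eq_self {G₀ : Type*} [GroupWithZero G₀]
    {x : G₀} {q : ℕ} (hq : q ≠ 0) (hx0 : x ≠ 0) (hx : (x ^ q) ^ q = x) :
    x ^ ((q - 1) * (q + 1)) = 1 := by
  have hexp : (q - 1) * (q + 1) + 1 = q * q := by
    obtain ⟨r, rfl⟩ : ∃ r, q = r + 1 := ⟨q - 1, by omega⟩
    rw [Nat.add_sub_cancel]
    ring
  apply mul_right_cancel₀ hx0
  rw [← pow_succ, hexp, pow_mul, hx, one_mul]

theorem Subfield.eq_zero_of_mul_add_mul_eq_zero {L : Type*} [Field L] (F : Subfield L)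
    {c d x y : L} (hc : c ∈ F) (hd : d ∈ F) (hxy : x / y ∉ F) (h : c * x + d * y = 0) :
    c = 0 ∧ d = 0 := by
  have hy : y ≠ 0 := by
    rintro rfl
    exact hxy (by rw [div_zero]; exact F.zero_mem)
  by_cases hc0 : c = 0
  · subst hc0
    exact ⟨rfl, (mul_eq_zero.mp (by simpa using h)).resolve_right hy⟩
  · refine absurd ?_ hxy
    rw [show x / y = -d / c by rw [div_eq_div_iff hy hc0]; linear_combination h]
    exact F.div_mem (F.neg_mem hd) hc

section FiniteSubfield

variable {L : Type*} [Field L] (F : Subfield L) [Fintype F]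

local notation "q" => Fintype.card F

theorem Subfield.mem_of_pow_card_sub_one_eq_one {x : L} (hx : x ^ (q - 1) = 1) : x ∈ F := by
  rw [F.mem_iff_pow_card_eq_self, ← Nat.sub_add_cancel Fintype.card_pos, pow_succ, hx, one_mul]

theorem add_add_pow_card_pow_eq_zero {lam mu nu a b : L} (hlam : lam ∈ F) (hmu : mu ∈ F)
    (hnu : nu ∈ F) (h : lam * a + mu * b + nu = 0) (k : ℕ) :
    lam * a ^ q ^ k + mu * b ^ q ^ k + nu = 0 := by
  have hfrob : ∀ x, (FiniteField.frobeniusAlgHom F L ^ k) x = x ^ q ^ k := fun x => by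
    rw [AlgHom.coe_pow, FiniteField.coe_frobeniusAlgHom, pow_iterate]
  have hfix : ∀ c ∈ F, c ^ q ^ k = c := fun c hc =>
    congrArg Subtype.val (FiniteField.pow_card_pow k (⟨c, hc⟩ : F))
  have := congrArg (FiniteField.frobeniusAlgHom F L ^ k) h
  simp only [map_add, map_mul, map_zero] at this
  simp only [hfrob] at this
  rwa [hfix lam hlam, hfix mu hmu, hfix nu hnu] at this

theorem pow_card_pow_card_eq_self_of_add_add_eq_zero {n : ℕ} {lam mu nu a b : L} (hlam : lam ∈ F)
    (hmu : mu ∈ F) (hnu : nu ∈ F) (hmu0 : mu ≠ 0) (hnu0 : nu ≠ 0) (ha0 : a ≠ 0) (hb0 : b ≠ 0)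
    (hNa : a ^ (q ^ n + 1) ∈ F) (hNb : b ^ (q ^ n + 1) ∈ F) (h : lam * a + mu * b + nu = 0) :
    (b ^ q) ^ q = b := by
  set A := a ^ (q ^ n + 1)
  set B := b ^ (q ^ n + 1)
  have hconj := add_add_pow_card_pow_eq_zero F hlam hmu hnu h n
  rw [eq_div_of_mul_eq ha0 (pow_succ a _).symm, eq_div_of_mul_eq hb0 (pow_succ b _).symm] at hconj
  have hconj' : lam * A * b + mu * B * a + nu * a * b = 0 := by
    field_simp at hconj
    linear_combination hconj
  have hquad : (nu * mu) * b ^ 2 + (mu ^ 2 * B + nu ^ 2 - lam ^ 2 * A) * b + mu * nu * B = 0 := by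
    linear_combination (mu * B + nu * b) * h - lam * hconj'
  have hfix : ∀ c ∈ F, (FiniteField.frobeniusAlgHom F L : L →+* L) c = c := fun c hc =>
    (F.mem_iff_pow_card_eq_self).mp hc
  exact RingHom.apply_apply_eq_self_of_quadratic _ (mul_ne_zero hnu0 hmu0)
    (hfix _ (by aesop)) (hfix _ (by aesop)) (hfix _ (by aesop)) hquad

theorem false_of_add_add_eq_zero {n : ℕ} (hn : Even n) {lam mu nu u v w : L} (hlam : lam ∈ F)
    (hmu : mu ∈ F) (hnu : nu ∈ F) (hlam0 : lam ≠ 0) (hmu0 : mu ≠ 0) (hnu0 : nu ≠ 0)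
    (hu : u ^ ((q - 1) * (q ^ n + 1)) = 1) (hv : v ^ ((q - 1) * (q ^ n + 1)) = 1)
    (hw : w ^ ((q - 1) * (q ^ n + 1)) = 1) (huv : u / v ∉ F) (hvw : v / w ∉ F) (huw : u / w ∉ F)
    (h : lam * u + mu * v + nu * w = 0) : False := by
  have hw0 : w ≠ 0 := by
    rintro rfl
    exact huw (by rw [div_zero]; exact F.zero_mem)
  set a := u / w
  set b := v / w
  have ha0 : a ≠ 0 := fun ha => huw (ha ▸ F.zero_mem)
  have hb0 : b ≠ 0 := fun hb => hvw (hb ▸ F.zero_mem)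
  have ha : a ^ ((q - 1) * (q ^ n + 1)) = 1 := by rw [div_pow, hu, hw, div_one]
  have hb : b ^ ((q - 1) * (q ^ n + 1)) = 1 := by rw [div_pow, hv, hw, div_one]
  have hnorm : ∀ x : L, x ^ ((q - 1) * (q ^ n + 1)) = 1 → x ^ (q ^ n + 1) ∈ F := fun x hx =>
    F.mem_of_pow_card_sub_one_eq_one (by rw [← pow_mul, mul_comm, hx])
  have hrel : lam * a + mu * b + nu = 0 := by
    rw [show lam * a + mu * b + nu = (lam * u + mu * v + nu * w) / w by
      simp only [a, b]; field_simp, h, zero_div]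
  have hq : q ≠ 0 := Fintype.card_ne_zero
  have hb2 := pow_sub_one_mul_add_one_eq_one_of_pow_pow_eq_self hq hb0 <|
    pow_card_pow_card_eq_self_of_add_add_eq_zero F hlam hmu hnu hmu0 hnu0 ha0 hb0
      (hnorm a ha) (hnorm b hb) hrel
  have ha2 := pow_sub_one_mul_add_one_eq_one_of_pow_pow_eq_self hq ha0 <|
    pow_card_pow_card_eq_self_of_add_add_eq_zero F hmu hlam hnu hlam0 hnu0 hb0 ha0
      (hnorm b hb) (hnorm a ha) (by linear_combination hrel)
  have hneg : ∀ x ∉ F, x ^ ((q - 1) * (q ^ n + 1)) = 1 → x ^ ((q - 1) * (q + 1)) = 1 →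
      x ^ (q - 1) = -1 := fun x hxF hN hx =>
    (pow_sub_one_eq_one_or_eq_neg_one hn hN hx).resolve_left
      fun h1 => hxF (F.mem_of_pow_card_sub_one_eq_one h1)
  apply huv
  rw [← div_div_div_cancel_right₀ hw0]
  refine F.mem_of_pow_card_sub_one_eq_one ?_
  rw [div_pow, hneg a huw ha ha2, hneg b hvw hb hb2, div_neg, div_one, neg_neg]

theorem eq_zero_of_add_add_eq_zero {n : ℕ} (hn : Even n) {u v w : L}
    (hu : u ^ ((q - 1) * (q ^ n + 1)) = 1) (hv : v ^ ((q - 1) * (q ^ n + 1)) = 1)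
    (hw : w ^ ((q - 1) * (q ^ n + 1)) = 1) (huv : u / v ∉ F) (hvw : v / w ∉ F) (huw : u / w ∉ F)
    {lam mu nu : L} (hlam : lam ∈ F) (hmu : mu ∈ F) (hnu : nu ∈ F)
    (h : lam * u + mu * v + nu * w = 0) : lam = 0 ∧ mu = 0 ∧ nu = 0 := by
  by_cases hlam0 : lam = 0
  · subst hlam0
    exact ⟨rfl, F.eq_zero_of_mul_add_mul_eq_zero hmu hnu hvw (by linear_combination h)⟩
  by_cases hmu0 : mu = 0
  · subst hmu0
    exact absurd (F.eq_zero_of_mul_add_mul_eq_zero hlam hnu huw (by linear_combination h)).1 hlam0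
  by_cases hnu0 : nu = 0
  · subst hnu0
    exact absurd (F.eq_zero_of_mul_add_mul_eq_zero hlam hmu huv (by linear_combination h)).1 hlam0
  exact (false_of_add_add_eq_zero F hn hlam hmu hnu hlam0 hmu0 hnu0 hu hv hw huv hvw huw h).elim

end FiniteSubfield

theorem stmt9_general (q n : ℕ) (hneven : Even n)
    (L : Type*) [Field L] [Finite L]
    (F : Subfield L)
    (hFcard : Nat.card F = q)
    (β : L) (hβ : orderOf β = q ^ (2 * n) - 1)
    (ξ : L) (hξ : ξ = β ^ ((q ^ n - 1) / (q - 1)))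
    (u v w : L) (hu : ∃ i : ℕ, u = ξ ^ i) (hv : ∃ j : ℕ, v = ξ ^ j)
    (hw : ∃ k : ℕ, w = ξ ^ k)
    (huv : u / v ∉ F) (hvw : v / w ∉ F) (huw : u / w ∉ F) :
    ∀ lam mu nu : L, lam ∈ F → mu ∈ F → nu ∈ F →
      lam * u + mu * v + nu * w = 0 → lam = 0 ∧ mu = 0 ∧ nu = 0 := by
  have := Fintype.ofFinite F
  obtain rfl : Fintype.card F = q := Nat.card_eq_fintype_card.symm.trans hFcard
  have hξ1 := hξ ▸ pow_sub_one_mul_pow_add_one_eq_one_of_orderOf_eq hβ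
  have horbit : ∀ x : L, (∃ i : ℕ, x = ξ ^ i) →
      x ^ ((Fintype.card F - 1) * (Fintype.card F ^ n + 1)) = 1 := by
    rintro _ ⟨i, rfl⟩
    rw [pow_right_comm, hξ1, one_pow]
  intro lam mu nu hlam hmu hnu h
  exact eq_zero_of_add_add_eq_zero F hneven (horbit u hu) (horbit v hv) (horbit w hw) huv hvw huw
    hlam hmu hnu h

/-- Suppose `n` is even. If `u, v, w` are powers of `ξ` with none of the ratios
`u/v`, `v/w`, `u/w` in `F`, then `u, v, w` are linearly independent over `F`:
every `⟨ξ⟩`-orbit on `PG(2n-1,q)` is a cap when `n` is even. -/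
theorem stmt9 (q n : ℕ) (hq : IsPrimePow q) (hn : 2 ≤ n) (hneven : Even n)
    (L : Type*) [Field L] [Finite L]
    (F K : Subfield L) (hFK : F ≤ K)
    (hFcard : Nat.card F = q) (hKcard : Nat.card K = q ^ n)
    (hLcard : Nat.card L = q ^ (2 * n))
    (β : L) (hβ : orderOf β = q ^ (2 * n) - 1)
    (ξ : L) (hξ : ξ = β ^ ((q ^ n - 1) / (q - 1)))
    (u v w : L) (hu : ∃ i : ℕ, u = ξ ^ i) (hv : ∃ j : ℕ, v = ξ ^ j)
    (hw : ∃ k : ℕ, w = ξ ^ k)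
    (huv : u / v ∉ F) (hvw : v / w ∉ F) (huw : u / w ∉ F) :
    ∀ lam mu nu : L, lam ∈ F → mu ∈ F → nu ∈ F →
      lam * u + mu * v + nu * w = 0 → lam = 0 ∧ mu = 0 ∧ nu = 0 :=
  stmt9_general q n hneven L F hFcard β hβ ξ hξ u v w hu hv hw huv hvw huw
end

section
/- With V = L × K and C := {(c·β^k, c·γ^k) : k ∈ ℕ, c ∈ F, c ≠ 0} ∪ {(0, y) : y ∈ K, y ≠ 0}, where γ := β^{q^n+1} ∈ K: if φ : V → F is a nonzero F-linear map that vanishes on {0} × K (i.e. φ(0,y) = 0 for every y ∈ K; the corresponding hyperplane of PG(3n−1,q) contains Π), then the cardinality of {v ∈ C : φ(v) = 0} equals q^{2n} − q^{2n−1} + q^n − q. -/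
/-!
Write `N x = x ^ (q ^ n + 1)`, the norm from `L` onto `K`. Since `N (c * β ^ k) = c ^ 2 * γ ^ k`
for `c ∈ F`, the point `(c * β ^ k, c * γ ^ k)` is `(x, c⁻¹ * N x)` with `x = c * β ^ k`, and as `β`
generates `Lˣ` the first part of `C` is exactly `{(x, c * N x) | x ≠ 0, c ∈ Fˣ}`, a graph over
`Lˣ` with fibres `Fˣ`. Because `N x ∈ K` and `φ` kills `{0} × K`, `φ (x, c * N x) = φ (x, 0)`, so
this part meets the hyperplane in `(q ^ (2n-1) - 1) (q - 1)` points, the nonzero vectors of the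
kernel of the nonzero `F`-linear form `φ (·, 0)` times `Fˣ`. All `q ^ n - 1` points of `{0} × Kˣ`
lie on the hyperplane.
-/

open Polynomial in
theorem Subfield.pow_card_eq_self_iff {L : Type*} [Field L] (K : Subfield L) [Finite K] {x : L} :
    x ^ Nat.card K = x ↔ x ∈ K := by
  classical
  have hK : (K : Set L) ⊆ {y : L | y ^ Nat.card K = y} := fun y hy => by
    have := Fintype.ofFinite K
    simpa [Subtype.ext_iff, Nat.card_eq_fintype_card] using FiniteField.pow_card (⟨y, hy⟩ : K)
  have hp : (X ^ Nat.card K - X : L[X]) ≠ 0 :=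
    FiniteField.X_pow_card_sub_X_ne_zero L Finite.one_lt_card
  have hroots : {y : L | y ^ Nat.card K = y} ⊆ (X ^ Nat.card K - X : L[X]).roots.toFinset := by
    intro y hy
    simpa [mem_roots hp, sub_eq_zero] using hy
  have hle : {y : L | y ^ Nat.card K = y}.ncard ≤ (K : Set L).ncard :=
    calc _ ≤ ((X ^ Nat.card K - X : L[X]).roots.toFinset : Set L).ncard :=
          Set.ncard_le_ncard hroots (Finset.finite_toSet _)
      _ ≤ (X ^ Nat.card K - X : L[X]).natDegree := by
          rw [Set.ncard_coe_finset]
          exact (Multiset.toFinset_card_le _).trans (card_roots' _)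
      _ = (K : Set L).ncard := by
          rw [FiniteField.X_pow_card_sub_X_natDegree_eq L Finite.one_lt_card]
          exact Nat.card_coe_set_eq _
  rw [← SetLike.mem_coe,
    Set.eq_of_subset_of_ncard_le hK hle ((Finset.finite_toSet _).subset hroots)]
  rfl

theorem Subfield.pow_card_add_one_mem {L : Type*} [Field L] [Finite L] (K : Subfield L)
    (hL : Nat.card L = Nat.card K ^ 2) (x : L) : x ^ (Nat.card K + 1) ∈ K := by
  have := Fintype.ofFinite L
  rw [← K.pow_card_eq_self_iff, ← pow_mul, add_one_mul, pow_add, ← sq, ← hL,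
    Nat.card_eq_fintype_card, FiniteField.pow_card, pow_succ, mul_comm]

theorem FiniteField.exists_pow_eq_of_orderOf_eq {L : Type*} [Field L] [Finite L] {β : L}
    (hβ : orderOf β = Nat.card L - 1) {x : L} (hx : x ≠ 0) : ∃ k, β ^ k = x := by
  have := Fintype.ofFinite L
  rw [Nat.card_eq_fintype_card] at hβ
  have : NeZero (orderOf β) := ⟨by have := Fintype.one_lt_card (α := L); omega⟩
  obtain ⟨k, -, hk⟩ := (IsPrimitiveRoot.orderOf β).eq_pow_of_pow_eq_one
    (by rw [hβ]; exact FiniteField.pow_card_sub_one_eq_one x hx)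
  exact ⟨k, hk⟩

theorem Module.Dual.card_ker_mul_card {F V : Type*} [DivisionRing F] [AddCommGroup V] [Module F V]
    {f : Module.Dual F V} (hf : f ≠ 0) : Nat.card (LinearMap.ker f) * Nat.card F = Nat.card V := by
  rw [(LinearMap.ker f).card_eq_card_quotient_mul_card,
    Nat.card_congr (f.quotKerEquivOfSurjective (LinearMap.surjective hf)).toEquiv]

section Functional

variable {L : Type*} [Field L] (F : Subfield L) (φ : L × L → L)

def fstForm (hadd : ∀ u v : L × L, φ (u + v) = φ u + φ v)
    (hsmul : ∀ c ∈ F, ∀ v : L × L, φ (c * v.1, c * v.2) = c * φ v)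
    (hrange : ∀ v : L × L, φ v ∈ F) : Module.Dual F L where
  toFun x := ⟨φ (x, 0), hrange _⟩
  map_add' x y := by ext; simpa using hadd (x, 0) (y, 0)
  map_smul' c x := by ext; simpa [Subfield.smul_def] using hsmul c c.2 (x, 0)

theorem ncard_setOf_apply_fst_eq_zero_mul_card
    (hadd : ∀ u v : L × L, φ (u + v) = φ u + φ v)
    (hsmul : ∀ c ∈ F, ∀ v : L × L, φ (c * v.1, c * v.2) = c * φ v)
    (hrange : ∀ v : L × L, φ v ∈ F) (hne : ∃ x, φ (x, 0) ≠ 0) :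
    {x : L | φ (x, 0) = 0}.ncard * Nat.card F = Nat.card L := by
  have hf : fstForm F φ hadd hsmul hrange ≠ 0 := by
    obtain ⟨x, hx⟩ := hne
    exact fun h => hx (congrArg Subtype.val (LinearMap.congr_fun h x))
  have hker : (LinearMap.ker (fstForm F φ hadd hsmul hrange) : Set L) = {x | φ (x, 0) = 0} := by
    ext x
    simp [fstForm, Subtype.ext_iff]
  rw [← Module.Dual.card_ker_mul_card hf, ← hker, ← Nat.card_coe_set_eq]
  rfl

end Functional

section NormOrbit

variable {L : Type*} [Field L] (F : Subfield L)

def normOrbit (β γ : L) : Set (L × L) :=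
  {v | ∃ k : ℕ, ∃ c ∈ F, c ≠ 0 ∧ v = (c * β ^ k, c * γ ^ k)}

def normGraph (m : ℕ) (p : L × L) : L × L := (p.1, p.1 ^ (m + 1) * p.2)

variable {F}

theorem normOrbit_pow_eq_image {m : ℕ} {β : L} (hF : ∀ c ∈ F, c ^ m = c) (hβ : β ≠ 0)
    (hgen : ∀ x ≠ 0, ∃ k, β ^ k = x) :
    normOrbit F β (β ^ (m + 1)) = normGraph m '' ({0}ᶜ ×ˢ ((F : Set L) \ {0})) := by
  have hsq : ∀ c ∈ F, c ^ (m + 1) = c * c := fun c hc => by rw [pow_succ, hF c hc]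
  ext v
  constructor
  · rintro ⟨k, c, hc, hc0, rfl⟩
    refine ⟨(c * β ^ k, c⁻¹),
      ⟨mul_ne_zero hc0 (pow_ne_zero k hβ), F.inv_mem hc, inv_ne_zero hc0⟩, ?_⟩
    simp only [normGraph, Prod.mk.injEq, true_and]
    rw [mul_pow, hsq c hc, ← pow_mul, ← pow_mul, mul_comm k]
    field_simp
  · rintro ⟨⟨x, c⟩, ⟨hx0 : x ≠ 0, hc : c ∈ F, hc0 : c ≠ 0⟩, rfl⟩
    obtain ⟨k, hk⟩ := hgen (c * x) (mul_ne_zero hc0 hx0)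
    refine ⟨k, c⁻¹, F.inv_mem hc, inv_ne_zero hc0, ?_⟩
    simp only [normGraph, Prod.mk.injEq]
    rw [← pow_mul, mul_comm (m + 1) k, pow_mul, hk, mul_pow, hsq c hc]
    constructor <;> field_simp

theorem ncard_image_normGraph (m : ℕ) {s t : Set L} (hs : 0 ∉ s) :
    (normGraph m '' s ×ˢ t).ncard = s.ncard * t.ncard := by
  rw [Set.InjOn.ncard_image, Set.ncard_prod]
  rintro ⟨x, c⟩ ⟨hx, -⟩ ⟨x', c'⟩ - h
  obtain ⟨rfl, h⟩ := Prod.mk.inj h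
  exact Prod.ext rfl (mul_left_cancel₀ (pow_ne_zero _ (ne_of_mem_of_not_mem hx hs)) h)

theorem disjoint_image_normGraph_zero_prod (m : ℕ) {s t u : Set L} (hs : 0 ∉ s) :
    Disjoint (normGraph m '' s ×ˢ t) ({0} ×ˢ u) := by
  rw [Set.disjoint_left]
  rintro _ ⟨⟨x, c⟩, ⟨hx, -⟩, rfl⟩ ⟨h0, -⟩
  exact hs (by simpa [normGraph] using h0 ▸ hx)

theorem sep_image_normGraph_eq {K : Subfield L} {m : ℕ} (φ : L × L → L)
    (hφK : ∀ x y, y ∈ K → φ (x, y) = φ (x, 0)) (hnorm : ∀ x : L, x ^ (m + 1) ∈ K)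
    {s t : Set L} (ht : t ⊆ K) :
    {v ∈ normGraph m '' s ×ˢ t | φ v = 0} = normGraph m '' ((s ∩ {x | φ (x, 0) = 0}) ×ˢ t) := by
  change normGraph m '' s ×ˢ t ∩ {v | φ v = 0} = _
  rw [← Set.image_inter_preimage]
  congr 1
  ext ⟨x, c⟩
  simp only [Set.mem_inter_iff, Set.mem_prod, Set.mem_preimage, Set.mem_ofPred_eq, normGraph]
  constructor
  · rintro ⟨⟨hx, hc⟩, h⟩
    exact ⟨⟨hx, hφK x _ (K.mul_mem (hnorm x) (ht hc)) ▸ h⟩, hc⟩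
  · rintro ⟨⟨hx, h⟩, hc⟩
    exact ⟨⟨hx, hc⟩, hφK x _ (K.mul_mem (hnorm x) (ht hc)) ▸ h⟩

theorem sep_zero_prod_eq {K : Subfield L} (φ : L × L → L) (hPi : ∀ y ∈ K, φ (0, y) = 0) :
    {v ∈ {v : L × L | v.1 = 0 ∧ v.2 ∈ K ∧ v.2 ≠ 0} | φ v = 0} = {0} ×ˢ ((K : Set L) \ {0}) := by
  ext ⟨x, y⟩
  simp only [Set.mem_ofPred_eq, Set.mem_prod, Set.mem_singleton_iff, Set.mem_sdiff,
    SetLike.mem_coe]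
  constructor
  · rintro ⟨⟨rfl, hy, hy0⟩, -⟩
    exact ⟨rfl, hy, hy0⟩
  · rintro ⟨rfl, hy, hy0⟩
    exact ⟨⟨rfl, hy, hy0⟩, hPi y hy⟩

end NormOrbit

theorem pow_sub_one_mul_sub_one_add_pow_sub_one (q n : ℕ) (hq : 1 ≤ q) (hn : n ≠ 0) :
    (q ^ (2 * n - 1) - 1) * (q - 1) + (q ^ n - 1) = q ^ (2 * n) - q ^ (2 * n - 1) + q ^ n - q := by
  obtain ⟨m, rfl⟩ := Nat.exists_eq_succ_of_ne_zero hn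
  have h1 : 1 ≤ q ^ (2 * (m + 1) - 1) := Nat.one_le_pow _ _ hq
  have h2 : q ≤ q ^ (m + 1) := Nat.le_self_pow (by omega) q
  have h3 : q ^ (2 * (m + 1)) = q ^ (2 * (m + 1) - 1) * q := by
    rw [← pow_succ, Nat.sub_add_cancel (by omega)]
  rw [h3]
  generalize q ^ (2 * (m + 1) - 1) = a at h1 ⊢
  generalize q ^ (m + 1) = b at h2 ⊢
  obtain ⟨a, rfl⟩ := Nat.exists_eq_add_of_le' h1
  obtain ⟨q, rfl⟩ := Nat.exists_eq_add_of_le' hq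
  obtain ⟨b, rfl⟩ := Nat.exists_eq_add_of_le h2
  simp only [Nat.add_sub_cancel, add_mul, mul_add, one_mul, mul_one]
  omega

theorem stmt14_general (q n : ℕ)
    (L : Type*) [Field L] [Finite L]
    (F K : Subfield L) (hFK : F ≤ K)
    (hFcard : Nat.card F = q) (hKcard : Nat.card K = q ^ n)
    (hLcard : Nat.card L = q ^ (2 * n))
    (β : L) (hβ : orderOf β = q ^ (2 * n) - 1)
    (γ : L) (hγ : γ = β ^ (q ^ n + 1))
    (φ : L × L → L)
    (hadd : ∀ u v : L × L, φ (u + v) = φ u + φ v)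
    (hsmul : ∀ c ∈ F, ∀ v : L × L, φ (c * v.1, c * v.2) = c * φ v)
    (hrange : ∀ v : L × L, φ v ∈ F)
    (hne : ∃ x y : L, y ∈ K ∧ φ (x, y) ≠ 0)
    (hPi : ∀ y : L, y ∈ K → φ (0, y) = 0) :
    let C : Set (L × L) :=
      {v | (∃ k : ℕ, ∃ c ∈ F, c ≠ 0 ∧ v = (c * β ^ k, c * γ ^ k)) ∨
           (v.1 = 0 ∧ v.2 ∈ K ∧ v.2 ≠ 0)}
    Set.ncard {v ∈ C | φ v = 0} = q ^ (2 * n) - q ^ (2 * n - 1) + q ^ n - q := by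
  intro C
  have hq : 1 < q := hFcard ▸ Finite.one_lt_card
  have hn : n ≠ 0 := by
    rintro rfl
    exact (Finite.one_lt_card (α := K)).ne' (hKcard.trans (pow_zero q))
  have hF : ∀ c ∈ F, c ^ q ^ n = c := fun c hc => hKcard ▸ K.pow_card_eq_self_iff.2 (hFK hc)
  have hnorm : ∀ x : L, x ^ (q ^ n + 1) ∈ K :=
    hKcard ▸ K.pow_card_add_one_mem (by rw [hLcard, hKcard, ← pow_mul, mul_comm])
  have hβ0 : β ≠ 0 := by
    rintro rfl
    have : 1 < Nat.card L := Finite.one_lt_card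
    rw [orderOf_zero] at hβ
    omega
  have hgen : ∀ x ≠ 0, ∃ k, β ^ k = x := fun x hx =>
    FiniteField.exists_pow_eq_of_orderOf_eq (hLcard ▸ hβ) hx
  have hφK : ∀ x y, y ∈ K → φ (x, y) = φ (x, 0) := fun x y hy => by
    simpa [hPi y hy] using hadd (x, 0) (0, y)
  have hZ : {x : L | φ (x, 0) = 0}.ncard = q ^ (2 * n - 1) := by
    obtain ⟨x, y, hy, hxy⟩ := hne
    have := ncard_setOf_apply_fst_eq_zero_mul_card F φ hadd hsmul hrange ⟨x, hφK x y hy ▸ hxy⟩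
    rw [hFcard, hLcard, ← Nat.sub_add_cancel (by omega : 1 ≤ 2 * n), pow_succ] at this
    exact Nat.eq_of_mul_eq_mul_right (by omega) this
  have h0 : (0 : L) ∉ {x : L | φ (x, 0) = 0} \ {0} := fun h => h.2 rfl
  change Set.ncard {v | (v ∈ normOrbit F β γ ∨ v ∈ {v : L × L | v.1 = 0 ∧ v.2 ∈ K ∧ v.2 ≠ 0}) ∧
    φ v = 0} = _
  rw [Set.sep_union, hγ, normOrbit_pow_eq_image hF hβ0 hgen,
    sep_image_normGraph_eq φ hφK hnorm (Set.sdiff_subset.trans hFK), sep_zero_prod_eq φ hPi,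
    ← Set.sdiff_eq_compl_inter,
    Set.ncard_union_eq (disjoint_image_normGraph_zero_prod _ h0), ncard_image_normGraph _ h0,
    Set.ncard_prod, Set.ncard_singleton, one_mul,
    Set.ncard_sdiff_singleton_of_mem (s := {x : L | φ (x, 0) = 0}) (hPi 0 K.zero_mem),
    Set.ncard_sdiff_singleton_of_mem F.zero_mem, Set.ncard_sdiff_singleton_of_mem K.zero_mem, hZ,
    show (F : Set L).ncard = q from hFcard, show (K : Set L).ncard = q ^ n from hKcard]
  exact pow_sub_one_mul_sub_one_add_pow_sub_one q n hq.le hn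

/-- If the `F`-linear map `φ : V → F` (nonzero on `V = L × K`) vanishes on `{0} × K`
(the hyperplane contains `Π`), then `|C ∩ ker φ| = q^(2n) - q^(2n-1) + q^n - q`. -/
theorem stmt14 (q n : ℕ) (hq : IsPrimePow q) (hn : 2 ≤ n)
    (L : Type*) [Field L] [Finite L]
    (F K : Subfield L) (hFK : F ≤ K)
    (hFcard : Nat.card F = q) (hKcard : Nat.card K = q ^ n)
    (hLcard : Nat.card L = q ^ (2 * n))
    (β : L) (hβ : orderOf β = q ^ (2 * n) - 1)
    (γ : L) (hγ : γ = β ^ (q ^ n + 1))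
    (φ : L × L → L)
    (hadd : ∀ u v : L × L, φ (u + v) = φ u + φ v)
    (hsmul : ∀ c ∈ F, ∀ v : L × L, φ (c * v.1, c * v.2) = c * φ v)
    (hrange : ∀ v : L × L, φ v ∈ F)
    (hne : ∃ x y : L, y ∈ K ∧ φ (x, y) ≠ 0)
    (hPi : ∀ y : L, y ∈ K → φ (0, y) = 0) :
    let C : Set (L × L) :=
      {v | (∃ k : ℕ, ∃ c ∈ F, c ≠ 0 ∧ v = (c * β ^ k, c * γ ^ k)) ∨
           (v.1 = 0 ∧ v.2 ∈ K ∧ v.2 ≠ 0)}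
    Set.ncard {v ∈ C | φ v = 0} = q ^ (2 * n) - q ^ (2 * n - 1) + q ^ n - q :=
  stmt14_general q n L F K hFK hFcard hKcard hLcard β hβ γ hγ φ hadd hsmul hrange hne hPi
end
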